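/- arXiv:1509.08883 — 3 statements merged into one kernel-verified Lean document; each statement's English description precedes it below -/
import Mathlib

section
/- Let G be a countable discrete group, residually finite with respect to a sequence of finite-index normal subgroups G = N₀ ⊇ N₁ ⊇ N₂ ⊇ ⋯ with ⋂_{i≥1} N_i = {1}, equipped with a proper length function and the induced left-invariant metric, each G/N_i carrying the quotient metric. Then G has FDC if and only if there exists an increasing sequence of positive reals r_i with r_i → ∞ such that the coarse disjoint union of the balls B_{G/N_i}(1, r_i) has FDC. -/
/-!
If `N` meets the ball of radius `4c` of `G` only in `1`, the quotient map `G → G ⧸ N` is an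
isometry on the ball of radius `c`; properness of `l` and `⋂ Nᵢ = 1` give this for `Nᵢ` with
radii `rᵢ → ∞`. So the balls `B_{G/Nᵢ}(1, rᵢ)` embed isometrically into `G`, and every ball of
`G` embeds isometrically into some `B_{G/Nᵢ}(1, rᵢ)`. FDC passes to families embedding
isometrically into an FDC family. At scale `ρ`, the coarse disjoint union of finite spaces splits
into one bounded chunk and `ρ`-far pieces, and `G` splits into two `ρ`-disjoint families of
annuli, each annulus lying in a ball.
-/

open Set Filter
open scoped symmDiff

namespace FDCPaper

/-! ### Proper functions `[0,∞) → ℝ` : preimages of bounded sets are bounded. -/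

def ProperFn (ρ : ℝ → ℝ) : Prop :=
  ∀ C : ℝ, ∃ M : ℝ, ∀ t : ℝ, 0 ≤ t → |ρ t| ≤ C → t ≤ M

/-! ### Length functions on groups and the induced metrics -/

structure IsLengthFunction {G : Type*} [Group G] (l : G → ℝ) : Prop where
  nonneg : ∀ g, 0 ≤ l g
  len_one : l 1 = 0
  len_inv : ∀ g, l g⁻¹ = l g
  subadd : ∀ g h, l (g * h) ≤ l g + l h
  eq_one : ∀ g, l g = 0 → g = 1
  proper : ∀ R : ℝ, {g : G | l g ≤ R}.Finite

/-- The left invariant distance induced by a length function. -/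
def dl {G : Type*} [Group G] (l : G → ℝ) (g h : G) : ℝ := l (g⁻¹ * h)

/-- The quotient distance on `G ⧸ N`:
`d([g],[h]) = inf { d_G(g n₁, h n₂) : n₁, n₂ ∈ N }`. -/
noncomputable def qdist {G : Type*} [Group G] (l : G → ℝ) (N : Subgroup G)
    (x y : G ⧸ N) : ℝ :=
  sInf {r : ℝ | ∃ g h : G, (QuotientGroup.mk g : G ⧸ N) = x ∧
    (QuotientGroup.mk h : G ⧸ N) = y ∧ r = dl l g h}

/-- The quotient length on `G ⧸ N` : `l̄([g]) = inf { l(h) : [h] = [g] }`. -/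
noncomputable def qlen {G : Type*} [Group G] (l : G → ℝ) (N : Subgroup G) (x : G ⧸ N) : ℝ :=
  sInf {r : ℝ | ∃ g : G, (QuotientGroup.mk g : G ⧸ N) = x ∧ r = l g}

/-! ### Families of subsets of a single ambient space, decompositions -/

section Single

variable {α : Type*}

/-- The open ball, for a distance function. -/
def ballS (d : α → α → ℝ) (c : α) (R : ℝ) : Set α := {x | d c x < R}

/-- An `r`-disjoint family of subsets. -/
def rDisjS (d : α → α → ℝ) (r : ℝ) (P : Set (Set α)) : Prop :=
  ∀ A ∈ P, ∀ B ∈ P, A ≠ B → ∀ x ∈ A, ∀ y ∈ B, r ≤ d x y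

/-- A uniformly bounded family of subsets. -/
def BddS (d : α → α → ℝ) (𝒴 : Set (Set α)) : Prop :=
  ∃ C : ℝ, ∀ Y ∈ 𝒴, ∀ x ∈ Y, ∀ y ∈ Y, d x y ≤ C

/-- `X = X₀ ∪ X₁` where each `Xᵢ` is an `r`-disjoint union of members of `𝒴`. -/
def PieceDecomp (d : α → α → ℝ) (r : ℝ) (X : Set α) (𝒴 : Set (Set α)) : Prop :=
  ∃ P₀ P₁ : Set (Set α),
    X = ⋃₀ P₀ ∪ ⋃₀ P₁ ∧ rDisjS d r P₀ ∧ rDisjS d r P₁ ∧ ∀ A ∈ P₀ ∪ P₁, A ∈ 𝒴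

/-- `X = X₀ ∪ X₁`, `Xᵢ = ∪ⱼ Xᵢⱼ` with `Xᵢⱼ ∈ 𝒴`, and the cover `{Xᵢⱼ}` of `X` has
Lebesgue number `≥ R`. -/
def PieceFullDecomp (d : α → α → ℝ) (R : ℝ) (X : Set α) (𝒴 : Set (Set α)) : Prop :=
  ∃ P₀ P₁ : Set (Set α),
    X = ⋃₀ P₀ ∪ ⋃₀ P₁ ∧
    (∀ x ∈ X, ∃ A ∈ P₀ ∪ P₁, {y ∈ X | d x y < R} ⊆ A) ∧
    ∀ A ∈ P₀ ∪ P₁, A ∈ 𝒴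

/-- `𝒳` is `r`-decomposable over `𝒴` (families of subsets of a single space). -/
def DecompS (d : α → α → ℝ) (r : ℝ) (𝒳 𝒴 : Set (Set α)) : Prop :=
  ∀ X ∈ 𝒳, PieceDecomp d r X 𝒴

/-- `𝒳` is `R`-full decomposable over `𝒴`. -/
def FullDecompS (d : α → α → ℝ) (R : ℝ) (𝒳 𝒴 : Set (Set α)) : Prop :=
  ∀ X ∈ 𝒳, PieceFullDecomp d R X 𝒴

/-- Straight finite decomposition complexity of a family of subsets of a space. -/
def sFDCS (d : α → α → ℝ) (𝒳 : Set (Set α)) : Prop :=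
  ∀ R : ℕ → ℝ, (∀ n, 0 < R n) → StrictMono R →
    ∃ (m : ℕ) (𝒴 : ℕ → Set (Set α)), 𝒴 0 = 𝒳 ∧
      (∀ i < m, DecompS d (R i) (𝒴 i) (𝒴 (i + 1))) ∧ BddS d (𝒴 m)

/-- Straight FDC of a metric space, i.e. of the singleton family `{X}`. -/
def SpaceSFDC (d : α → α → ℝ) : Prop := sFDCS d {Set.univ}

end Single

/-! ### General metric families and finite decomposition complexity -/

/-- A metric family, realized as a set of subsets of an indexed collection of spaces
`Z i`, each equipped with its distance function. -/
abbrev Fam {ι : Type*} (Z : ι → Type*) := Set ((i : ι) × Set (Z i))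

section Families

variable {ι : Type*} {Z : ι → Type*}

/-- A (uniformly) bounded metric family. -/
def Bdd (d : ∀ i, Z i → Z i → ℝ) (𝒴 : Fam Z) : Prop :=
  ∃ C : ℝ, ∀ p ∈ 𝒴, ∀ x ∈ p.2, ∀ y ∈ p.2, d p.1 x y ≤ C

/-- The metric family `𝒳` is `r`-decomposable over the metric family `𝒴`. -/
def Decomp (d : ∀ i, Z i → Z i → ℝ) (r : ℝ) (𝒳 𝒴 : Fam Z) : Prop :=
  ∀ p ∈ 𝒳, PieceDecomp (d p.1) r p.2
    {A : Set (Z p.1) | (⟨p.1, A⟩ : (i : ι) × Set (Z i)) ∈ 𝒴}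

/-- The collections `D_α` : `D_0` consists of the bounded families, and for `α > 0`,
`𝒳 ∈ D_α` iff for every `r > 0` there are `β < α` and `𝒴 ∈ D_β` with `𝒳 →_r 𝒴`. -/
def DColl (d : ∀ i, Z i → Z i → ℝ) (α : Ordinal.{0}) : Set (Fam Z) :=
  {𝒳 | (α = 0 ∧ Bdd d 𝒳) ∨
    (α ≠ 0 ∧ ∀ r : ℝ, 0 < r →
      ∃ β : Ordinal.{0}, ∃ _ : β < α, ∃ 𝒴 ∈ DColl d β, Decomp d r 𝒳 𝒴)}
  termination_by α

/-- A metric family has finite decomposition complexity if it belongs to some `D_α`. -/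
def HasFDC (d : ∀ i, Z i → Z i → ℝ) (𝒳 : Fam Z) : Prop :=
  ∃ α : Ordinal.{0}, 𝒳 ∈ DColl d α

end Families

/-- FDC of a single metric space, i.e. of the singleton family `{X}`. -/
def SpaceFDC {X : Type*} (d : X → X → ℝ) : Prop :=
  HasFDC (ι := Unit) (Z := fun _ => X) (fun _ => d) {p | p.2 = Set.univ}

/-! ### Coarse disjoint unions and box spaces -/

/-- The diameter of a space with a distance function. -/
noncomputable def diamD {X : Type*} (d : X → X → ℝ) : ℝ :=
  sSup {r : ℝ | ∃ x y : X, r = d x y}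

/-- The coarse disjoint union distance: each piece keeps its own distance, and
`d(x,y) = diam Xᵢ + diam Xⱼ + i + j` for `x ∈ Xᵢ`, `y ∈ Xⱼ` with `i ≠ j`. -/
noncomputable def cuDist {X : ℕ → Type*} (d : ∀ i, X i → X i → ℝ) :
    (Σ i, X i) → (Σ i, X i) → ℝ := fun x y =>
  if h : x.1 = y.1 then d y.1 (h ▸ x.2) y.2
  else diamD (d x.1) + diamD (d y.1) + (x.1 : ℝ) + (y.1 : ℝ)

/-- The box space `□_{Nᵢ} G` : the coarse disjoint union of the quotients `G ⧸ Nᵢ`. -/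
noncomputable def boxDist {G : Type*} [Group G] (l : G → ℝ) (N : ℕ → Subgroup G) :
    (Σ i, G ⧸ N i) → (Σ i, G ⧸ N i) → ℝ :=
  cuDist (fun i => qdist l (N i))

/-! ### Equivariance -/

section EquivGroup

variable {G : Type*} [Group G]

/-- A family of subsets of `G` is `H`-invariant if it is closed under right
translation by elements of `H`. -/
def RInvFam (H : Subgroup G) (P : Set (Set G)) : Prop :=
  ∀ U ∈ P, ∀ h ∈ H, (fun g => g * h) '' U ∈ P

/-- An `H`-invariant decomposition of a single subset of `G`. -/
def PieceDecompInv (d : G → G → ℝ) (H : Subgroup G) (r : ℝ) (X : Set G)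
    (𝒴 : Set (Set G)) : Prop :=
  ∃ P₀ P₁ : Set (Set G),
    X = ⋃₀ P₀ ∪ ⋃₀ P₁ ∧ rDisjS d r P₀ ∧ rDisjS d r P₁ ∧
    (∀ A ∈ P₀ ∪ P₁, A ∈ 𝒴) ∧ RInvFam H P₀ ∧ RInvFam H P₁

/-- An `H`-invariant decomposition `𝒳 →_r 𝒴` of families of subsets of `G`. -/
def DecompSInv (d : G → G → ℝ) (H : Subgroup G) (r : ℝ) (𝒳 𝒴 : Set (Set G)) : Prop :=
  ∀ X ∈ 𝒳, PieceDecompInv d H r X 𝒴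

/-- An `H`-invariant full decomposition of a single subset of `G`. -/
def PieceFullDecompInv (d : G → G → ℝ) (H : Subgroup G) (R : ℝ) (X : Set G)
    (𝒴 : Set (Set G)) : Prop :=
  ∃ P₀ P₁ : Set (Set G),
    X = ⋃₀ P₀ ∪ ⋃₀ P₁ ∧
    (∀ x ∈ X, ∃ A ∈ P₀ ∪ P₁, {y ∈ X | d x y < R} ⊆ A) ∧
    (∀ A ∈ P₀ ∪ P₁, A ∈ 𝒴) ∧ RInvFam H P₀ ∧ RInvFam H P₁

/-- An `H`-invariant full decomposition `𝒳 ↝_R 𝒴` of families of subsets of `G`. -/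
def FullDecompSInv (d : G → G → ℝ) (H : Subgroup G) (R : ℝ) (𝒳 𝒴 : Set (Set G)) : Prop :=
  ∀ X ∈ 𝒳, PieceFullDecompInv d H R X 𝒴

/-- `G` has equi-variant straight FDC with respect to the sequence `{Nᵢ}` : for any
increasing sequence `R₁ < R₂ < ⋯` of positive reals there are `m`, `K` and a chain
of decompositions `{G} →_{R₁} 𝒴₁ →_{R₂} ⋯ →_{R_m} 𝒴_m` with `𝒴_m` bounded and the
last decomposition `N_K`-invariant. -/
def EquivSFDC (d : G → G → ℝ) (N : ℕ → Subgroup G) : Prop :=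
  ∀ R : ℕ → ℝ, (∀ n, 0 < R n) → StrictMono R →
    ∃ m K : ℕ, 0 < m ∧ ∃ 𝒴 : ℕ → Set (Set G), 𝒴 0 = {Set.univ} ∧
      (∀ i < m, DecompS d (R i) (𝒴 i) (𝒴 (i + 1))) ∧ BddS d (𝒴 m) ∧
      DecompSInv d (N K) (R (m - 1)) (𝒴 (m - 1)) (𝒴 m)

end EquivGroup

/-! ### Stable FDC -/

/-- The distances on the members of the family `{H/K : K ⊴ H ≤ G}` : `H` carries the
metric induced from `G` and `H/K` the corresponding quotient metric. -/
noncomputable def stableD {G : Type*} [Group G] (l : G → ℝ) :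
    ∀ p : Σ H : Subgroup G, Subgroup ↥H, (↥p.1 ⧸ p.2) → (↥p.1 ⧸ p.2) → ℝ :=
  fun p => qdist (fun h : ↥p.1 => l ↑h) p.2

/-- `G` has stable FDC if the family `{H/K : K ⊴ H ≤ G}` has FDC. -/
def StableFDC (G : Type*) [Group G] (l : G → ℝ) : Prop :=
  HasFDC (stableD l)
    {q : (p : Σ H : Subgroup G, Subgroup ↥H) × Set (↥p.1 ⧸ p.2) |
      q.1.2.Normal ∧ q.2 = Set.univ}

/-! ### Coarse equivalence of metric families -/

/-- A coarse equivalence between two indexed metric families: a family of maps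
`f i : Z i → W (σ i)` which is uniformly expansive and effectively proper, admitting
a coarse embedding `g i : W (σ i) → Z i` in the opposite direction with
`d(x, g(f x)) ≤ C` and `d(y, f(g y)) ≤ C`. -/
def FamCoarseEquiv {ι κ : Type*} {Z : ι → Type*} {W : κ → Type*}
    (d : ∀ i, Z i → Z i → ℝ) (e : ∀ j, W j → W j → ℝ) : Prop :=
  ∃ (σ : ι → κ) (f : ∀ i, Z i → W (σ i)) (g : ∀ i, W (σ i) → Z i)
    (ρ₁ ρ₂ ρ₃ ρ₄ : ℝ → ℝ) (C : ℝ),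
    Monotone ρ₁ ∧ ProperFn ρ₁ ∧ Monotone ρ₂ ∧ ProperFn ρ₂ ∧
    Monotone ρ₃ ∧ ProperFn ρ₃ ∧ Monotone ρ₄ ∧ ProperFn ρ₄ ∧
    (∀ i x x', e (σ i) (f i x) (f i x') ≤ ρ₁ (d i x x')) ∧
    (∀ i x x', ρ₂ (d i x x') ≤ e (σ i) (f i x) (f i x')) ∧
    (∀ i y y', d i (g i y) (g i y') ≤ ρ₃ (e (σ i) y y')) ∧
    (∀ i y y', ρ₄ (e (σ i) y y') ≤ d i (g i y) (g i y')) ∧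
    (∀ i x, d i x (g i (f i x)) ≤ C) ∧ (∀ i y, e (σ i) y (f i (g i y)) ≤ C)

/-! ### Amenability (Følner) and elementary amenability -/

/-- Følner characterization of amenability for a countable discrete group. -/
def Amenable (G : Type*) [Group G] : Prop :=
  ∀ (F : Finset G) (ε : ℝ), 0 < ε →
    ∃ S : Finset G, S.Nonempty ∧ ∀ g ∈ F,
      letI := Classical.decEq G
      (((S.image (fun s => g * s)) ∆ S).card : ℝ) ≤ ε * (S.card : ℝ)

/-- The class of elementary amenable groups: the smallest class of groups containing
the finite groups and the abelian groups and closed under extensions and directed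
unions. -/
inductive IsElementaryAmenable : ∀ (G : Type u) [Group G], Prop where
  | of_finite (G : Type u) [Group G] (h : Finite G) : IsElementaryAmenable G
  | of_comm (G : Type u) [Group G] (h : ∀ a b : G, a * b = b * a) :
      IsElementaryAmenable G
  | of_extension (N G Q : Type u) [Group N] [Group G] [Group Q]
      (φ : N →* G) (ψ : G →* Q) (hφ : Function.Injective φ)
      (hψ : Function.Surjective ψ) (hex : φ.range = ψ.ker)
      (hN : IsElementaryAmenable N) (hQ : IsElementaryAmenable Q) :
      IsElementaryAmenable G
  | of_directedUnion (G : Type u) [Group G] (ι : Type u) (K : ι → Subgroup G)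
      (hdir : ∀ i j, ∃ k, K i ≤ K k ∧ K j ≤ K k)
      (hcover : ∀ g : G, ∃ i, g ∈ K i)
      (hK : ∀ i, IsElementaryAmenable ↥(K i)) : IsElementaryAmenable G


section SingleSpace

variable {X Y : Type*} {d : X → X → ℝ} {e : Y → Y → ℝ} {r : ℝ}

theorem pieceDecomp_of_rDisjS {A : Set X} {P 𝒴 : Set (Set X)} (hA : A = ⋃₀ P)
    (hP : rDisjS d r P) (hP𝒴 : P ⊆ 𝒴) : PieceDecomp d r A 𝒴 :=
  ⟨P, ∅, by simpa using hA, hP, by simp [rDisjS], fun B hB => hP𝒴 (by simpa using hB)⟩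

theorem rDisjS.mono {r' : ℝ} {P : Set (Set X)} (hP : rDisjS d r P) (hr : r' ≤ r) :
    rDisjS d r' P :=
  fun A hA B hB hAB x hx y hy => hr.trans (hP A hA B hB hAB x hx y hy)

theorem pieceDecomp_of_mem {A : Set X} {𝒴 : Set (Set X)} (hA : A ∈ 𝒴) : PieceDecomp d r A 𝒴 :=
  pieceDecomp_of_rDisjS (sUnion_singleton A).symm
    (fun _ hB _ hC hBC => absurd (hB.trans hC.symm) hBC) (singleton_subset_iff.2 hA)

theorem PieceDecomp.mono {A : Set X} {𝒴 𝒴' : Set (Set X)} (h : PieceDecomp d r A 𝒴)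
    (h𝒴 : 𝒴 ⊆ 𝒴') : PieceDecomp d r A 𝒴' :=
  let ⟨P₀, P₁, hA, h₀, h₁, hmem⟩ := h
  ⟨P₀, P₁, hA, h₀, h₁, fun B hB => h𝒴 (hmem B hB)⟩

theorem rDisjS.comap {A : Set X} {B : Set Y} (f : A → B)
    (hf : ∀ x y, e (f x) (f y) = d x y) {P : Set (Set Y)} (hP : rDisjS e r P) :
    rDisjS d r ((fun C => {x | ∃ hx : x ∈ A, (f ⟨x, hx⟩ : Y) ∈ C}) '' P) := by
  rintro _ ⟨C, hC, rfl⟩ _ ⟨C', hC', rfl⟩ hne x ⟨hx, hxC⟩ y ⟨hy, hyC'⟩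
  rw [← hf ⟨x, hx⟩ ⟨y, hy⟩]
  exact hP C hC C' hC' (fun h => hne (h ▸ rfl)) _ hxC _ hyC'

theorem PieceDecomp.comap {A : Set X} {B : Set Y} (f : A → B)
    (hf : ∀ x y, e (f x) (f y) = d x y) {𝒴 : Set (Set Y)} (h : PieceDecomp e r B 𝒴) :
    PieceDecomp d r A
      {A' | ∃ B' ∈ 𝒴, ∃ f' : A' → B', ∀ x y, e (f' x) (f' y) = d x y} := by
  obtain ⟨P₀, P₁, hB, h₀, h₁, hmem⟩ := h
  set pre : Set Y → Set X := fun C => {x | ∃ hx : x ∈ A, (f ⟨x, hx⟩ : Y) ∈ C}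
  refine ⟨pre '' P₀, pre '' P₁, ?_, h₀.comap f hf, h₁.comap f hf, ?_⟩
  · ext x
    constructor
    · intro hx
      have hfx : (f ⟨x, hx⟩ : Y) ∈ ⋃₀ P₀ ∪ ⋃₀ P₁ := hB ▸ (f ⟨x, hx⟩).2
      rcases hfx with ⟨C, hC, hxC⟩ | ⟨C, hC, hxC⟩
      exacts [Or.inl ⟨pre C, mem_image_of_mem _ hC, hx, hxC⟩,
        Or.inr ⟨pre C, mem_image_of_mem _ hC, hx, hxC⟩]
    · rintro (⟨_, ⟨C, -, rfl⟩, hx, -⟩ | ⟨_, ⟨C, -, rfl⟩, hx, -⟩) <;> exact hx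
  · rintro _ (⟨C, hC, rfl⟩ | ⟨C, hC, rfl⟩) <;>
      exact ⟨C, hmem C (by simp [hC]), fun x => ⟨f ⟨x, x.2.1⟩, x.2.2⟩, fun x y => hf _ _⟩

end SingleSpace

section Families

variable {ι κ : Type*} {Z : ι → Type*} {W : κ → Type*} {d : ∀ i, Z i → Z i → ℝ}
  {e : ∀ j, W j → W j → ℝ}

theorem mem_DColl_iff {α : Ordinal.{0}} {𝒳 : Fam Z} :
    𝒳 ∈ DColl d α ↔ (α = 0 ∧ Bdd d 𝒳) ∨
      (α ≠ 0 ∧ ∀ r : ℝ, 0 < r →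
        ∃ β : Ordinal.{0}, ∃ _ : β < α, ∃ 𝒴 ∈ DColl d β, Decomp d r 𝒳 𝒴) := by
  rw [DColl]; rfl

theorem mem_DColl_succ {α : Ordinal.{0}} {𝒳 : Fam Z}
    (h : ∀ r : ℝ, 0 < r → ∃ 𝒴 ∈ DColl d α, Decomp d r 𝒳 𝒴) : 𝒳 ∈ DColl d (Order.succ α) :=
  mem_DColl_iff.2 <| Or.inr ⟨(zero_le.trans_lt (Order.lt_succ α)).ne', fun r hr =>
    let ⟨𝒴, h𝒴, hdec⟩ := h r hr
    ⟨α, Order.lt_succ α, 𝒴, h𝒴, hdec⟩⟩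

theorem Bdd.union {𝒳 𝒴 : Fam Z} (h𝒳 : Bdd d 𝒳) (h𝒴 : Bdd d 𝒴) : Bdd d (𝒳 ∪ 𝒴) := by
  obtain ⟨C, hC⟩ := h𝒳
  obtain ⟨C', hC'⟩ := h𝒴
  refine ⟨max C C', fun p hp x hx y hy => ?_⟩
  rcases hp with hp | hp
  exacts [(hC p hp x hx y hy).trans (le_max_left _ _),
    (hC' p hp x hx y hy).trans (le_max_right _ _)]

theorem union_mem_DColl_of_bdd {α : Ordinal.{0}} {𝒳 ℬ : Fam Z} (h𝒳 : 𝒳 ∈ DColl d α)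
    (hℬ : Bdd d ℬ) : 𝒳 ∪ ℬ ∈ DColl d α := by
  induction α using WellFoundedLT.induction generalizing 𝒳 with
  | _ α IH =>
  rcases mem_DColl_iff.1 h𝒳 with ⟨rfl, hbdd⟩ | ⟨hα, h𝒳⟩
  · exact mem_DColl_iff.2 (Or.inl ⟨rfl, hbdd.union hℬ⟩)
  · refine mem_DColl_iff.2 (Or.inr ⟨hα, fun r hr => ?_⟩)
    obtain ⟨β, hβ, 𝒴, h𝒴, hdec⟩ := h𝒳 r hr
    refine ⟨β, hβ, 𝒴 ∪ ℬ, IH β hβ h𝒴, ?_⟩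
    rintro p (hp | hp)
    · exact (hdec p hp).mono fun A hA => Or.inl hA
    · exact pieceDecomp_of_mem (Or.inr hp)

def isoEmbeddable (d : ∀ i, Z i → Z i → ℝ) (e : ∀ j, W j → W j → ℝ) (𝒴 : Fam W) : Fam Z :=
  {p | ∃ q ∈ 𝒴, ∃ f : p.2 → q.2, ∀ x y, e q.1 (f x) (f y) = d p.1 x y}

theorem mem_DColl_of_subset_isoEmbeddable {α : Ordinal.{0}} {𝒳 : Fam Z} {𝒴 : Fam W}
    (h𝒳 : 𝒳 ⊆ isoEmbeddable d e 𝒴) (h𝒴 : 𝒴 ∈ DColl e α) : 𝒳 ∈ DColl d α := by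
  induction α using WellFoundedLT.induction generalizing 𝒳 𝒴 with
  | _ α IH =>
  rcases mem_DColl_iff.1 h𝒴 with ⟨rfl, C, hC⟩ | ⟨hα, h𝒴⟩
  · refine mem_DColl_iff.2 (Or.inl ⟨rfl, C, fun p hp x hx y hy => ?_⟩)
    obtain ⟨q, hq, f, hf⟩ := h𝒳 hp
    rw [← hf ⟨x, hx⟩ ⟨y, hy⟩]
    exact hC q hq _ (f _).2 _ (f _).2
  · refine mem_DColl_iff.2 (Or.inr ⟨hα, fun r hr => ?_⟩)
    obtain ⟨β, hβ, 𝒴', h𝒴', hdec⟩ := h𝒴 r hr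
    refine ⟨β, hβ, isoEmbeddable d e 𝒴', IH β hβ subset_rfl h𝒴', fun p hp => ?_⟩
    obtain ⟨q, hq, f, hf⟩ := h𝒳 hp
    exact ((hdec q hq).comap f hf).mono fun A ⟨B, hB, f', hf'⟩ => ⟨⟨q.1, B⟩, hB, f', hf'⟩

end Families

section Spaces

variable {X Y : Type*} {d : X → X → ℝ} {e : Y → Y → ℝ}

theorem mem_isoEmbeddable_univ {A : Set X} (f : A → Y) (hf : ∀ x y, e (f x) (f y) = d x y) :
    (⟨(), A⟩ : (_ : Unit) × Set X) ∈
      isoEmbeddable (fun _ => d) (fun _ => e) {p : (_ : Unit) × Set Y | p.2 = univ} :=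
  ⟨⟨(), univ⟩, rfl, fun x => ⟨f x, trivial⟩, hf⟩

theorem diamD_nonneg (he : ∀ x y, 0 ≤ e x y) : 0 ≤ diamD e :=
  Real.sSup_nonneg (by rintro _ ⟨x, y, rfl⟩; exact he x y)

theorem le_diamD [Finite Y] (x y : Y) : e x y ≤ diamD e :=
  le_csSup ((finite_range fun p : Y × Y => e p.1 p.2).subset
    (by rintro _ ⟨x, y, rfl⟩; exact ⟨(x, y), rfl⟩)).bddAbove ⟨x, y, rfl⟩

end Spaces

section CoarseUnion

variable {X : ℕ → Type*} {d : ∀ i, X i → X i → ℝ}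

theorem cuDist_mk_mk (i : ℕ) (a b : X i) : cuDist d ⟨i, a⟩ ⟨i, b⟩ = d i a b := by
  simp [cuDist]

theorem natCast_add_le_cuDist (hd : ∀ i x y, 0 ≤ d i x y) {x y : Σ i, X i} (h : x.1 ≠ y.1) :
    (x.1 : ℝ) + y.1 ≤ cuDist d x y := by
  rw [cuDist, dif_neg h]
  linarith [diamD_nonneg (hd x.1), diamD_nonneg (hd y.1)]

theorem cuDist_le_of_fst_le [∀ i, Finite (X i)] (hd : ∀ i x y, 0 ≤ d i x y) {k : ℕ}
    {x y : Σ i, X i} (hx : x.1 ≤ k) (hy : y.1 ≤ k) :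
    cuDist d x y ≤ 2 * ∑ i ∈ Finset.range (k + 1), diamD (d i) + 2 * k := by
  have hdiam : ∀ i ≤ k, diamD (d i) ≤ ∑ i ∈ Finset.range (k + 1), diamD (d i) := fun i hi =>
    Finset.single_le_sum (fun j _ => diamD_nonneg (hd j)) (Finset.mem_range.2 (by omega))
  have hsum : 0 ≤ ∑ i ∈ Finset.range (k + 1), diamD (d i) :=
    Finset.sum_nonneg fun j _ => diamD_nonneg (hd j)
  have hxk : (x.1 : ℝ) ≤ k := by exact_mod_cast hx
  have hyk : (y.1 : ℝ) ≤ k := by exact_mod_cast hy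
  by_cases h : x.1 = y.1
  · obtain ⟨i, a⟩ := x
    obtain ⟨j, b⟩ := y
    obtain rfl : i = j := h
    rw [cuDist_mk_mk]
    linarith [le_diamD (e := d i) a b, hdiam i hx]
  · rw [cuDist, dif_neg h]
    linarith [hdiam x.1 hx, hdiam y.1 hy]

theorem bdd_singleton_fst_le [∀ i, Finite (X i)] (hd : ∀ i x y, 0 ≤ d i x y) (k : ℕ) :
    Bdd (fun _ : Unit => cuDist d) {⟨(), {x | x.1 ≤ k}⟩} :=
  ⟨_, fun _ hp _ hx _ hy => by obtain rfl := hp; exact cuDist_le_of_fst_le hd hx hy⟩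

theorem rDisjS_insert_fst_le_image_fst_eq (hd : ∀ i x y, 0 ≤ d i x y) (k : ℕ) :
    rDisjS (cuDist d) (k + 1)
      (insert {x | x.1 ≤ k} ((fun i => {x : Σ i, X i | x.1 = i}) '' Ioi k)) := by
  rintro A hA B hB hAB x hx y hy
  have key : x.1 ≠ y.1 ∧ (k < x.1 ∨ k < y.1) := by
    rcases hA with rfl | ⟨i, hi, rfl⟩ <;> rcases hB with rfl | ⟨j, hj, rfl⟩
    · exact absurd rfl hAB
    all_goals simp only [mem_ofPred_eq, mem_Ioi] at *
    · omega
    · omega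
    · exact ⟨fun h => hAB (by rw [← hx, ← hy, h]), by omega⟩
  have hlt : (k : ℝ) + 1 ≤ x.1 + y.1 := by exact_mod_cast (by omega : k + 1 ≤ x.1 + y.1)
  exact hlt.trans (natCast_add_le_cuDist hd key.1)

theorem spaceFDC_cuDist_of_isometry [∀ i, Finite (X i)] (hd : ∀ i x y, 0 ≤ d i x y)
    {Y : Type*} {e : Y → Y → ℝ} (hY : SpaceFDC e) (f : ∀ i, X i → Y)
    (hf : ∀ i x y, e (f i x) (f i y) = d i x y) : SpaceFDC (cuDist d) := by
  obtain ⟨α, hα⟩ := hY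
  set piece : ℕ → Set (Σ i, X i) := fun i => {x | x.1 = i}
  have hpieces : {p : (_ : Unit) × Set (Σ i, X i) | ∃ i, p.2 = piece i} ∈
      DColl (fun _ => cuDist d) α := by
    refine mem_DColl_of_subset_isoEmbeddable (fun p ⟨i, hp⟩ => ?_) hα
    obtain ⟨⟨⟩, A⟩ := p
    obtain rfl : A = piece i := hp
    refine mem_isoEmbeddable_univ (fun x => f i (x.2 ▸ x.1.2)) fun ⟨⟨j, a⟩, hj⟩ ⟨⟨j', b⟩, hj'⟩ => ?_
    obtain rfl : j = i := hj
    obtain rfl : j' = j := hj'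
    rw [hf, cuDist_mk_mk]
    rfl
  refine ⟨Order.succ α, mem_DColl_succ fun ρ hρ => ?_⟩
  set k := ⌈ρ⌉₊
  refine ⟨_, union_mem_DColl_of_bdd hpieces (bdd_singleton_fst_le hd k), fun p hp => ?_⟩
  refine pieceDecomp_of_rDisjS ?_
    ((rDisjS_insert_fst_le_image_fst_eq hd k).mono (by linarith [Nat.le_ceil ρ])) ?_
  · rw [show p.2 = univ from hp]
    ext x
    by_cases hx : x.1 ≤ k
    · simpa using Or.inl hx
    · simp only [mem_univ, true_iff]
      exact ⟨piece x.1, Or.inr ⟨x.1, by simpa using hx, rfl⟩, rfl⟩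
  · rintro A (rfl | ⟨i, -, rfl⟩)
    exacts [Or.inr rfl, Or.inl ⟨i, rfl⟩]

end CoarseUnion

section LengthFunction

variable {G : Type*} [Group G] {l : G → ℝ}

theorem dl_comm (hl : IsLengthFunction l) (g h : G) : dl l g h = dl l h g := by
  rw [dl, dl, ← hl.len_inv, mul_inv_rev, inv_inv]

theorem len_le_len_add_dl (hl : IsLengthFunction l) (g h : G) : l h ≤ l g + dl l g h := by
  simpa [dl] using hl.subadd g (g⁻¹ * h)

def annulus (l : G → ℝ) (ρ : ℝ) (k : ℕ) : Set G := {g | k * ρ ≤ l g ∧ l g < (k + 1) * ρ}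

theorem mem_annulus_floor (hl : IsLengthFunction l) {ρ : ℝ} (hρ : 0 < ρ) (g : G) :
    g ∈ annulus l ρ ⌊l g / ρ⌋₊ :=
  ⟨(le_div_iff₀ hρ).1 (Nat.floor_le (div_nonneg (hl.nonneg g) hρ.le)),
    (div_lt_iff₀ hρ).1 (Nat.lt_floor_add_one _)⟩

theorem le_dl_of_mem_annulus (hl : IsLengthFunction l) {ρ : ℝ} (hρ : 0 < ρ) {a b : ℕ}
    (hab : a + 2 ≤ b) {g h : G} (hg : g ∈ annulus l ρ a) (hh : h ∈ annulus l ρ b) :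
    ρ ≤ dl l g h := by
  have hab' : (a : ℝ) + 2 ≤ b := by exact_mod_cast hab
  nlinarith [hg.2, hh.1, len_le_len_add_dl hl g h]

theorem rDisjS_image_annulus (hl : IsLengthFunction l) {ρ : ℝ} (hρ : 0 < ρ) {s : Set ℕ}
    (hs : ∀ a ∈ s, ∀ b ∈ s, a < b → a + 2 ≤ b) : rDisjS (dl l) ρ (annulus l ρ '' s) := by
  rintro _ ⟨a, ha, rfl⟩ _ ⟨b, hb, rfl⟩ hne g hg h hh
  rcases lt_or_gt_of_ne (fun hab : a = b => hne (hab ▸ rfl)) with hab | hab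
  · exact le_dl_of_mem_annulus hl hρ (hs a ha b hb hab) hg hh
  · exact dl_comm hl g h ▸ le_dl_of_mem_annulus hl hρ (hs b hb a ha hab) hh hg

theorem pieceDecomp_univ_annulus (hl : IsLengthFunction l) {ρ : ℝ} (hρ : 0 < ρ) :
    PieceDecomp (dl l) ρ univ (range (annulus l ρ)) := by
  refine ⟨annulus l ρ '' {k | k % 2 = 0}, annulus l ρ '' {k | k % 2 = 1}, ?_,
    rDisjS_image_annulus hl hρ ?_, rDisjS_image_annulus hl hρ ?_, ?_⟩
  · refine (eq_univ_of_forall fun g => ?_).symm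
    have hg := mem_annulus_floor hl hρ g
    rcases Nat.mod_two_eq_zero_or_one ⌊l g / ρ⌋₊ with h | h
    exacts [Or.inl ⟨_, mem_image_of_mem _ h, hg⟩, Or.inr ⟨_, mem_image_of_mem _ h, hg⟩]
  · intro a ha b hb hab
    have : a % 2 = b % 2 := ha.trans hb.symm
    omega
  · intro a ha b hb hab
    have : a % 2 = b % 2 := ha.trans hb.symm
    omega
  · rintro _ (⟨k, -, rfl⟩ | ⟨k, -, rfl⟩) <;> exact mem_range_self k

theorem spaceFDC_dl_of_isometric_balls (hl : IsLengthFunction l) {Y : Type*} {e : Y → Y → ℝ}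
    (hY : SpaceFDC e)
    (hball : ∀ c : ℝ, ∃ f : {g : G // l g < c} → Y, ∀ g h, e (f g) (f h) = dl l g h) :
    SpaceFDC (dl l) := by
  obtain ⟨α, hα⟩ := hY
  refine ⟨Order.succ α, mem_DColl_succ fun ρ hρ =>
    ⟨_, mem_DColl_of_subset_isoEmbeddable subset_rfl hα, fun p hp => ?_⟩⟩
  refine (show p.2 = univ from hp) ▸ (pieceDecomp_univ_annulus hl hρ).mono ?_
  rintro _ ⟨k, rfl⟩
  obtain ⟨f, hf⟩ := hball ((k + 1) * ρ)
  exact mem_isoEmbeddable_univ (fun g => f ⟨g, g.2.2⟩) fun g h => hf _ _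

end LengthFunction

section Quotient

variable {G : Type*} [Group G] {l : G → ℝ} {N : Subgroup G}

def MeetsBallTrivially (l : G → ℝ) (N : Subgroup G) (c : ℝ) : Prop :=
  ∀ n ∈ N, l n ≤ c → n = 1

theorem MeetsBallTrivially.anti {N' : Subgroup G} {c : ℝ} (h : MeetsBallTrivially l N c)
    (hN : N' ≤ N) : MeetsBallTrivially l N' c :=
  fun n hn => h n (hN hn)

theorem meetsBallTrivially_zero (hl : IsLengthFunction l) : MeetsBallTrivially l N 0 :=
  fun n _ hn => hl.eq_one n (le_antisymm hn (hl.nonneg n))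

theorem qdist_nonneg (hl : IsLengthFunction l) (x y : G ⧸ N) : 0 ≤ qdist l N x y :=
  Real.sInf_nonneg (by rintro _ ⟨g, h, -, -, rfl⟩; exact hl.nonneg _)

theorem qdist_mk_le (hl : IsLengthFunction l) (g h : G) :
    qdist l N (g : G ⧸ N) (h : G ⧸ N) ≤ dl l g h :=
  csInf_le ⟨0, by rintro _ ⟨g, h, -, -, rfl⟩; exact hl.nonneg _⟩ ⟨g, h, rfl, rfl, rfl⟩

theorem mk_inv_mul_eq_of_mk_eq [N.Normal] {g g' h h' : G} (hg : (g' : G ⧸ N) = g)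
    (hh : (h' : G ⧸ N) = h) : ((g'⁻¹ * h' : G) : G ⧸ N) = ((g⁻¹ * h : G) : G ⧸ N) := by
  rw [QuotientGroup.mk_mul, QuotientGroup.mk_mul, QuotientGroup.mk_inv, QuotientGroup.mk_inv,
    hg, hh]

theorem exists_mk_eq_of_qdist_one_lt [N.Normal] {x : G ⧸ N} {r : ℝ}
    (hx : qdist l N ((1 : G) : G ⧸ N) x < r) : ∃ u : G, (u : G ⧸ N) = x ∧ l u < r := by
  obtain ⟨h, rfl⟩ := QuotientGroup.mk_surjective x
  obtain ⟨_, ⟨g', h', hg', hh', rfl⟩, hlt⟩ :=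
    exists_lt_of_csInf_lt (by exact ⟨_, 1, h, rfl, rfl, rfl⟩) hx
  exact ⟨g'⁻¹ * h', by simpa using mk_inv_mul_eq_of_mk_eq hg' hh', hlt⟩

theorem qdist_mk_mk_eq_dl (hl : IsLengthFunction l) [N.Normal] {c : ℝ}
    (hN : MeetsBallTrivially l N (4 * c)) {g h : G} (hg : l g < c) (hh : l h < c) :
    qdist l N (g : G ⧸ N) (h : G ⧸ N) = dl l g h := by
  refine le_antisymm (qdist_mk_le hl g h) (le_csInf ⟨_, g, h, rfl, rfl, rfl⟩ ?_)
  rintro _ ⟨g', h', hg', hh', rfl⟩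
  set w := g⁻¹ * h
  set u := g'⁻¹ * h'
  have hw : l w < 2 * c := by
    linarith [hl.subadd g⁻¹ h, hl.len_inv g]
  have hn : w⁻¹ * u ∈ N := QuotientGroup.eq.1 (mk_inv_mul_eq_of_mk_eq hg' hh').symm
  -- a representative `u = w n` of `w N` shorter than `w` forces `l n < 4c`, so `n = 1`
  by_contra! hlt
  change l u < l w at hlt
  have hn1 : w⁻¹ * u ≠ 1 := fun h1 => hlt.ne (congrArg l (inv_mul_eq_one.1 h1)).symm
  refine hn1 (hN _ hn ?_)
  linarith [hl.subadd w⁻¹ u, hl.len_inv w]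

end Quotient

section Residual

variable {G : Type*} [Group G] {l : G → ℝ} {N : ℕ → Subgroup G}

theorem exists_pos_forall_len_le_eq_one (hl : IsLengthFunction l) :
    ∃ ε > 0, ∀ g : G, l g ≤ ε → g = 1 := by
  have : Northcott l := ⟨hl.proper⟩
  rcases eq_empty_or_nonempty {g : G | g ≠ 1} with h | h
  · exact ⟨1, one_pos, fun g _ => by simpa using eq_empty_iff_forall_notMem.1 h g⟩
  · obtain ⟨g₀, hg₀, hmin⟩ := Northcott.exists_min_image l _ h
    have hpos : 0 < l g₀ := (hl.nonneg g₀).lt_of_ne fun h => hg₀ (hl.eq_one g₀ h.symm)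
    refine ⟨l g₀ / 2, by positivity, fun g hg => by_contra fun hg1 => ?_⟩
    linarith [hmin g hg1]

theorem eventually_meetsBallTrivially (hl : IsLengthFunction l) (hN : Antitone N)
    (htriv : ∀ g : G, (∀ i, g ∈ N i) → g = 1) (c : ℝ) :
    ∀ᶠ i in atTop, MeetsBallTrivially l (N i) c := by
  have hmem : ∀ g ∈ {g : G | l g ≤ c}, ∀ᶠ i in atTop, g ∈ N i → g = 1 := by
    intro g _
    by_cases hg : g = 1
    · exact Eventually.of_forall fun _ _ => hg
    · obtain ⟨i₀, hi₀⟩ : ∃ i₀, g ∉ N i₀ := not_forall.1 (mt (htriv g) hg)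
      exact (eventually_ge_atTop i₀).mono fun i hi hgi => absurd (hN hi hgi) hi₀
  exact ((hl.proper c).eventually_all.2 hmem).mono fun i hi n hn hln => hi n hln hn

theorem exists_radii_meetsBallTrivially (hl : IsLengthFunction l) (hN : Antitone N)
    (htriv : ∀ g : G, (∀ i, g ∈ N i) → g = 1) :
    ∃ r : ℕ → ℝ, (∀ i, 0 < r i) ∧ Monotone r ∧ Tendsto r atTop atTop ∧
      ∀ i, MeetsBallTrivially l (N i) (4 * r i) := by
  classical
  obtain ⟨ε, hε, hεtriv⟩ := exists_pos_forall_len_le_eq_one hl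
  set K : ℕ → ℕ := fun i => Nat.findGreatest (fun k => MeetsBallTrivially l (N i) k) i
  have hK : ∀ i, MeetsBallTrivially l (N i) (K i) := fun i =>
    Nat.findGreatest_spec (m := 0) (P := fun k : ℕ => MeetsBallTrivially l (N i) k) (Nat.zero_le i)
      (by simpa using meetsBallTrivially_zero hl)
  have hKmono : Monotone K := fun i j hij =>
    Nat.findGreatest_mono (fun _ hk => hk.anti (hN hij)) hij
  have hKtend : Tendsto K atTop atTop := tendsto_atTop.2 fun k =>
    ((eventually_meetsBallTrivially hl hN htriv k).and (eventually_ge_atTop k)).mono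
      fun i hi => Nat.le_findGreatest hi.2 hi.1
  -- `ε` keeps the radii positive while `K i = 0`
  refine ⟨fun i => max ε (K i) / 4, fun i => by positivity, fun i j hij => ?_, ?_, fun i => ?_⟩
  · have : (K i : ℝ) ≤ K j := by exact_mod_cast hKmono hij
    dsimp only
    gcongr
  · exact tendsto_atTop_mono (fun i => by gcongr; exact le_max_right _ _)
      ((tendsto_natCast_atTop_atTop.comp hKtend).atTop_div_const four_pos)
  · rw [mul_div_cancel₀ _ four_ne_zero]
    rcases max_choice ε (K i) with h | h <;> rw [h]
    exacts [fun n _ hn => hεtriv n hn, hK i]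

end Residual

section Balls

variable {G : Type*} [Group G] {l : G → ℝ} {N : ℕ → Subgroup G}

abbrev qBall (l : G → ℝ) (N : Subgroup G) (r : ℝ) : Type _ :=
  {x : G ⧸ N // qdist l N ((1 : G) : G ⧸ N) x < r}

theorem spaceFDC_cuDist_qBall (hl : IsLengthFunction l) (hnorm : ∀ i, (N i).Normal)
    (hfin : ∀ i, (N i).FiniteIndex) {r : ℕ → ℝ}
    (hr : ∀ i, MeetsBallTrivially l (N i) (4 * r i)) (hG : SpaceFDC (dl l)) :
    SpaceFDC (cuDist (X := fun i => qBall l (N i) (r i))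
      (fun i x y => qdist l (N i) x.1 y.1)) := by
  have hs : ∀ i (x : qBall l (N i) (r i)), ∃ u : G, (u : G ⧸ N i) = x.1 ∧ l u < r i :=
    fun i x => exists_mk_eq_of_qdist_one_lt x.2
  choose s hs_mk hs_len using hs
  have : ∀ i, Finite (G ⧸ N i) := fun i => Subgroup.finite_quotient_of_finiteIndex
  refine spaceFDC_cuDist_of_isometry (fun i x y => qdist_nonneg hl _ _) hG s fun i x y => ?_
  rw [← qdist_mk_mk_eq_dl hl (hr i) (hs_len i x) (hs_len i y), hs_mk, hs_mk]

theorem spaceFDC_of_spaceFDC_cuDist_qBall (hl : IsLengthFunction l)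
    (hnorm : ∀ i, (N i).Normal) (hN : Antitone N) (htriv : ∀ g : G, (∀ i, g ∈ N i) → g = 1)
    {r : ℕ → ℝ} (hr : Tendsto r atTop atTop)
    (h : SpaceFDC (cuDist (X := fun i => qBall l (N i) (r i))
      (fun i x y => qdist l (N i) x.1 y.1))) :
    SpaceFDC (dl l) := by
  refine spaceFDC_dl_of_isometric_balls hl h fun c => ?_
  obtain ⟨i, hci, hi⟩ :=
    ((hr.eventually_ge_atTop c).and (eventually_meetsBallTrivially hl hN htriv (4 * c))).exists
  have hmk : ∀ g : {g : G // l g < c}, qdist l (N i) ((1 : G) : G ⧸ N i) g.1 < r i := fun g =>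
    (qdist_mk_le hl 1 g.1).trans_lt (by simpa [dl] using g.2.trans_le hci)
  exact ⟨fun g => ⟨i, g.1, hmk g⟩, fun g h => by
    rw [cuDist_mk_mk]; exact qdist_mk_mk_eq_dl hl hi g.2 h.2⟩

end Balls

theorem fdc_iff_coarseUnion_of_balls_fdc_general {G : Type*} [Group G]
    (l : G → ℝ) (hl : IsLengthFunction l) (N : ℕ → Subgroup G)
    (hnorm : ∀ i, (N i).Normal) (hmono : ∀ i, N (i + 1) ≤ N i)
    (hfin : ∀ i, (N i).FiniteIndex) (htriv : ∀ g : G, (∀ i, g ∈ N i) → g = 1) :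
    SpaceFDC (dl l) ↔
      ∃ r : ℕ → ℝ, (∀ i, 0 < r i) ∧ Monotone r ∧ Tendsto r atTop atTop ∧
        SpaceFDC (cuDist
          (X := fun i => {x : G ⧸ N i // qdist l (N i) (QuotientGroup.mk 1) x < r i})
          (fun i x y => qdist l (N i) x.1 y.1)) := by
  have hN : Antitone N := antitone_nat_of_succ_le hmono
  constructor
  · intro hG
    obtain ⟨r, hr_pos, hr_mono, hr_tend, hr_triv⟩ := exists_radii_meetsBallTrivially hl hN htriv
    exact ⟨r, hr_pos, hr_mono, hr_tend, spaceFDC_cuDist_qBall hl hnorm hfin hr_triv hG⟩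
  · rintro ⟨r, -, -, hr_tend, h⟩
    exact spaceFDC_of_spaceFDC_cuDist_qBall hl hnorm hN htriv hr_tend h

/-- Theorem 1: `G` has FDC iff there is an increasing sequence
`rᵢ → ∞` of positive reals such that the coarse disjoint union of the balls
`B_{G/Nᵢ}(1, rᵢ)` has FDC. -/
theorem fdc_iff_coarseUnion_of_balls_fdc {G : Type*} [Group G] [Countable G]
    (l : G → ℝ) (hl : IsLengthFunction l) (N : ℕ → Subgroup G)
    (hnorm : ∀ i, (N i).Normal) (hmono : ∀ i, N (i + 1) ≤ N i) (h0 : N 0 = ⊤)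
    (hfin : ∀ i, (N i).FiniteIndex) (htriv : ∀ g : G, (∀ i, g ∈ N i) → g = 1) :
    SpaceFDC (dl l) ↔
      ∃ r : ℕ → ℝ, (∀ i, 0 < r i) ∧ Monotone r ∧ Tendsto r atTop atTop ∧
        SpaceFDC (cuDist
          (X := fun i => {x : G ⧸ N i // qdist l (N i) (QuotientGroup.mk 1) x < r i})
          (fun i x y => qdist l (N i) x.1 y.1)) :=
  fdc_iff_coarseUnion_of_balls_fdc_general l hl N hnorm hmono hfin htriv

end FDCPaper
end

section
/- Let G be a countable discrete group, residually finite with respect to a sequence of finite-index normal subgroups G = N₀ ⊇ N₁ ⊇ N₂ ⊇ ⋯ with ⋂_{i≥1} N_i = {1}, equipped with a proper length function and the induced left-invariant metric, each G/N_i carrying the quotient metric. If the box space □_{N_i}G has FDC, then G has FDC. -/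
open Set Filter
open scoped symmDiff

namespace FDCPaper

section Aux3
variable {G : Type*} [Group G]

lemma qdist_le_dl' (l : G → ℝ) (hl : IsLengthFunction l) (N : Subgroup G) (g h : G) :
    qdist l N (QuotientGroup.mk g) (QuotientGroup.mk h) ≤ dl l g h := by
  apply csInf_le
  · refine ⟨0, ?_⟩
    rintro s ⟨a, b, -, -, rfl⟩
    exact hl.nonneg _
  · exact ⟨g, h, rfl, rfl, rfl⟩

lemma qdist_eq_dl' (l : G → ℝ) (hl : IsLengthFunction l) (N : Subgroup G) (hN : N.Normal)
    (ρ : ℝ) (hsmall : ∀ n ∈ N, l n ≤ 4 * ρ → n = 1)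
    (x y : G) (hx : l x ≤ ρ) (hy : l y ≤ ρ) :
    qdist l N (QuotientGroup.mk x) (QuotientGroup.mk y) = dl l x y := by
  refine le_antisymm (qdist_le_dl' l hl N x y) ?_
  refine le_csInf ⟨dl l x y, x, y, rfl, rfl, rfl⟩ ?_
  rintro s ⟨g, h, hg, hh, rfl⟩
  have ha : x⁻¹ * g ∈ N := by
    have h1 := (QuotientGroup.eq (s := N)).1 hg
    simpa [mul_inv_rev] using N.inv_mem h1
  have hb : y⁻¹ * h ∈ N := by
    have h1 := (QuotientGroup.eq (s := N)).1 hh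
    simpa [mul_inv_rev] using N.inv_mem h1
  have hcN : (x⁻¹*y)⁻¹ * (x⁻¹*g)⁻¹ * (x⁻¹*y) * (y⁻¹*h) ∈ N := by
    have h1 : (x⁻¹*y)⁻¹ * (x⁻¹*g)⁻¹ * (x⁻¹*y) ∈ N := by
      have h2 := hN.conj_mem _ (N.inv_mem ha) (x⁻¹*y)⁻¹
      simpa using h2
    exact N.mul_mem h1 hb
  have key : g⁻¹ * h = (x⁻¹*y) * ((x⁻¹*y)⁻¹ * (x⁻¹*g)⁻¹ * (x⁻¹*y) * (y⁻¹*h)) := by group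
  set z := x⁻¹ * y
  set c := (x⁻¹*y)⁻¹ * (x⁻¹*g)⁻¹ * (x⁻¹*y) * (y⁻¹*h) with hcdef
  have hlz : l z ≤ 2 * ρ := by
    have h1 := hl.subadd x⁻¹ y
    rw [hl.len_inv] at h1
    calc l z ≤ l x + l y := h1
    _ ≤ 2 * ρ := by linarith
  have hmain : l z ≤ l (z * c) := by
    by_contra hlt
    push_neg at hlt
    have h2 : l c ≤ l z + l (z * c) := by
      have h3 := hl.subadd z⁻¹ (z * c)
      rw [hl.len_inv, inv_mul_cancel_left] at h3
      exact h3
    have hc4 : l c ≤ 4 * ρ := by linarith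
    have := hsmall c hcN hc4
    rw [this, mul_one] at hlt
    exact lt_irrefl _ hlt
  calc dl l x y = l z := rfl
  _ ≤ l (z * c) := hmain
  _ = dl l g h := by rw [dl, key]

lemma exists_deep' (l : G → ℝ) (hl : IsLengthFunction l) (N : ℕ → Subgroup G)
    (hmono : ∀ i, N (i + 1) ≤ N i) (htriv : ∀ g : G, (∀ i, g ∈ N i) → g = 1) (R : ℝ) :
    ∃ i, ∀ n ∈ N i, l n ≤ R → n = 1 := by
  classical
  have hanti : Antitone N := antitone_nat_of_succ_le hmono
  have hfin : {g : G | l g ≤ R}.Finite := hl.proper R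
  have hch : ∀ g : G, ∃ k, g ≠ 1 → g ∉ N k := by
    intro g
    by_cases hg : g = 1
    · exact ⟨0, fun h => absurd hg h⟩
    · have : ∃ k, g ∉ N k := by
        by_contra hc
        push_neg at hc
        exact hg (htriv g hc)
      obtain ⟨k, hk⟩ := this
      exact ⟨k, fun _ => hk⟩
  choose k hk using hch
  obtain ⟨M, hM⟩ := (hfin.image k).bddAbove
  refine ⟨M, fun n hn hln => ?_⟩
  by_contra hne
  exact hk n hne (hanti (hM (Set.mem_image_of_mem k hln)) hn)

lemma boxDist_mk (l : G → ℝ) (N : ℕ → Subgroup G) (i : ℕ) (a b : G ⧸ N i) :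
    boxDist l N ⟨i, a⟩ ⟨i, b⟩ = qdist l (N i) a b := by
  unfold boxDist cuDist
  exact dif_pos rfl

/-- Transfer: a `G`-family whose members admit distance-preserving maps into members of a
box-space family in `D_α` is itself in `D_α`. -/
lemma transfer (l : G → ℝ) (N : ℕ → Subgroup G) :
    ∀ α : Ordinal.{0}, ∀ 𝒵 : Fam (fun _ : Unit => Σ i, G ⧸ N i),
      𝒵 ∈ DColl (fun _ => boxDist l N) α →
      ∀ 𝔛 : Fam (fun _ : Unit => G),
        (∀ p ∈ 𝔛, ∃ f : G → Σ i, G ⧸ N i, ∃ q ∈ 𝒵,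
            (∀ x ∈ p.2, ∀ y ∈ p.2, boxDist l N (f x) (f y) = dl l x y) ∧
            (∀ x ∈ p.2, f x ∈ q.2)) →
        𝔛 ∈ DColl (fun _ => dl l) α := by
  intro α
  induction α using Ordinal.induction with
  | h α IH =>
    intro 𝒵 h𝒵 𝔛 h𝔛
    rw [DColl] at h𝒵 ⊢
    rcases h𝒵 with ⟨hα0, C, hC⟩ | ⟨hα0, hdec⟩
    · left
      refine ⟨hα0, C, ?_⟩
      rintro p hp x hx y hy
      obtain ⟨f, q, hq, hiso, himg⟩ := h𝔛 p hp
      calc dl l x y = boxDist l N (f x) (f y) := (hiso x hx y hy).symm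
      _ ≤ C := hC q hq (f x) (himg x hx) (f y) (himg y hy)
    · right
      refine ⟨hα0, fun r hr => ?_⟩
      obtain ⟨β, hβ, 𝒴, h𝒴, hde⟩ := hdec r hr
      set 𝔜 : Fam (fun _ : Unit => G) :=
        {p' | ∃ f : G → Σ i, G ⧸ N i, ∃ q ∈ 𝒴,
            (∀ x ∈ p'.2, ∀ y ∈ p'.2, boxDist l N (f x) (f y) = dl l x y) ∧
            (∀ x ∈ p'.2, f x ∈ q.2)} with h𝔜def
      have h𝔜 : 𝔜 ∈ DColl (fun _ => dl l) β := IH β hβ 𝒴 h𝒴 𝔜 (fun p' hp' => hp')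
      refine ⟨β, hβ, 𝔜, h𝔜, ?_⟩
      rintro p hp
      obtain ⟨f, q, hq, hiso, himg⟩ := h𝔛 p hp
      obtain ⟨P₀, P₁, hcover, hd0, hd1, hmem⟩ := hde q hq
      refine ⟨(fun A => p.2 ∩ f ⁻¹' A) '' P₀, (fun A => p.2 ∩ f ⁻¹' A) '' P₁, ?_, ?_, ?_, ?_⟩
      · ext x
        constructor
        · intro hx
          have hfx : f x ∈ q.2 := himg x hx
          rw [hcover] at hfx
          rcases hfx with hfx | hfx
          · obtain ⟨A, hA, hxA⟩ := hfx
            exact Or.inl ⟨p.2 ∩ f ⁻¹' A, ⟨A, hA, rfl⟩, hx, hxA⟩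
          · obtain ⟨A, hA, hxA⟩ := hfx
            exact Or.inr ⟨p.2 ∩ f ⁻¹' A, ⟨A, hA, rfl⟩, hx, hxA⟩
        · rintro (⟨A', ⟨A, hA, rfl⟩, hx, -⟩ | ⟨A', ⟨A, hA, rfl⟩, hx, -⟩) <;> exact hx
      · rintro A' ⟨A, hA, rfl⟩ B' ⟨B, hB, rfl⟩ hne x ⟨hxp, hxA⟩ y ⟨hyp, hyB⟩
        have hAB : A ≠ B := by rintro rfl; exact hne rfl
        calc r ≤ boxDist l N (f x) (f y) := hd0 A hA B hB hAB (f x) hxA (f y) hyB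
        _ = dl l x y := hiso x hxp y hyp
      · rintro A' ⟨A, hA, rfl⟩ B' ⟨B, hB, rfl⟩ hne x ⟨hxp, hxA⟩ y ⟨hyp, hyB⟩
        have hAB : A ≠ B := by rintro rfl; exact hne rfl
        calc r ≤ boxDist l N (f x) (f y) := hd1 A hA B hB hAB (f x) hxA (f y) hyB
        _ = dl l x y := hiso x hxp y hyp
      · rintro A' (⟨A, hA, rfl⟩ | ⟨A, hA, rfl⟩)
        · exact ⟨f, ⟨q.1, A⟩, hmem A (Or.inl hA),
            fun x hx y hy => hiso x hx.1 y hy.1, fun x hx => hx.2⟩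
        · exact ⟨f, ⟨q.1, A⟩, hmem A (Or.inr hA),
            fun x hx y hy => hiso x hx.1 y hy.1, fun x hx => hx.2⟩

end Aux3

/-- Theorem 1, second part: if the box space `□_{Nᵢ} G` has FDC,
then `G` has FDC. -/
theorem fdc_of_boxSpace_fdc {G : Type*} [Group G] [Countable G]
    (l : G → ℝ) (hl : IsLengthFunction l) (N : ℕ → Subgroup G)
    (hnorm : ∀ i, (N i).Normal) (hmono : ∀ i, N (i + 1) ≤ N i) (h0 : N 0 = ⊤)
    (hfin : ∀ i, (N i).FiniteIndex) (htriv : ∀ g : G, (∀ i, g ∈ N i) → g = 1)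
    (hbox : SpaceFDC (boxDist l N)) : SpaceFDC (dl l) := by
  classical
  obtain ⟨α, hα⟩ := hbox
  refine ⟨Order.succ α, ?_⟩
  rw [DColl]
  right
  refine ⟨Order.succ_ne_bot α, fun r hr => ?_⟩
  set 𝒵box : Fam (fun _ : Unit => Σ i, G ⧸ N i) := {p | p.2 = Set.univ} with h𝒵def
  set 𝔜 : Fam (fun _ : Unit => G) :=
    {p' | ∃ f : G → Σ i, G ⧸ N i, ∃ q ∈ 𝒵box,
        (∀ x ∈ p'.2, ∀ y ∈ p'.2, boxDist l N (f x) (f y) = dl l x y) ∧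
        (∀ x ∈ p'.2, f x ∈ q.2)} with h𝔜def
  have h𝔜 : 𝔜 ∈ DColl (fun _ => dl l) α := transfer l N α 𝒵box hα 𝔜 (fun p' hp' => hp')
  refine ⟨α, Order.lt_succ α, 𝔜, h𝔜, ?_⟩
  rintro p hp
  -- the annuli at scale `r`
  set Ann : ℕ → Set G := fun k => {g | (k : ℝ) * r ≤ l g ∧ l g < ((k : ℝ) + 1) * r}
    with hAnndef
  have hAnnMem : ∀ k : ℕ, (⟨p.1, Ann k⟩ : (i : Unit) × Set G) ∈ 𝔜 := by
    intro k
    obtain ⟨i, hi⟩ := exists_deep' l hl N hmono htriv (4 * (((k : ℝ) + 1) * r))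
    refine ⟨fun g => ⟨i, QuotientGroup.mk g⟩, ⟨(), Set.univ⟩, rfl, ?_,
      fun x _ => Set.mem_univ _⟩
    intro x hx y hy
    rw [boxDist_mk]
    exact qdist_eq_dl' l hl (N i) (hnorm i) (((k : ℝ) + 1) * r) hi x y
      (le_of_lt hx.2) (le_of_lt hy.2)
  have dlsymm : ∀ x y : G, dl l x y = dl l y x := by
    intro x y
    have h1 := hl.len_inv (y⁻¹ * x)
    simpa [dl, mul_inv_rev] using h1
  have hmain : ∀ a b : ℕ, a + 2 ≤ b → ∀ x ∈ Ann a, ∀ y ∈ Ann b, r ≤ dl l x y := by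
    intro a b hab x hx y hy
    have hrev : l y ≤ l x + l (x⁻¹ * y) := by
      have h := hl.subadd x (x⁻¹ * y)
      rwa [mul_inv_cancel_left] at h
    have hcast : (a : ℝ) + 2 ≤ (b : ℝ) := by exact_mod_cast hab
    have hbr : ((a : ℝ) + 2) * r ≤ (b : ℝ) * r :=
      mul_le_mul_of_nonneg_right hcast hr.le
    have hx2 := hx.2
    have hy1 := hy.1
    show r ≤ l (x⁻¹ * y)
    linarith
  have hdisj : ∀ j : ℕ, rDisjS (dl l) r {A | ∃ k, k % 2 = j ∧ A = Ann k} := by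
    rintro j A ⟨k, hk, rfl⟩ B ⟨k', hk', rfl⟩ hne x hx y hy
    have hkk : k ≠ k' := by rintro rfl; exact hne rfl
    have : k + 2 ≤ k' ∨ k' + 2 ≤ k := by omega
    rcases this with h | h
    · exact hmain k k' h x hx y hy
    · rw [dlsymm]
      exact hmain k' k h y hy x hx
  refine ⟨{A | ∃ k, k % 2 = 0 ∧ A = Ann k}, {A | ∃ k, k % 2 = 1 ∧ A = Ann k},
    ?_, hdisj 0, hdisj 1, ?_⟩
  · have hp2 : p.2 = Set.univ := hp
    rw [hp2]
    ext g
    simp only [Set.mem_univ, true_iff]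
    set k := ⌊l g / r⌋₊ with hkdef
    have hg0 : (0 : ℝ) ≤ l g / r := div_nonneg (hl.nonneg g) hr.le
    have hg1 : (k : ℝ) * r ≤ l g := by
      have h1 : (k : ℝ) ≤ l g / r := Nat.floor_le hg0
      calc (k : ℝ) * r ≤ (l g / r) * r := mul_le_mul_of_nonneg_right h1 hr.le
      _ = l g := div_mul_cancel₀ _ hr.ne'
    have hg2 : l g < ((k : ℝ) + 1) * r := by
      have h1 : l g / r < (k : ℝ) + 1 := Nat.lt_floor_add_one _
      calc l g = (l g / r) * r := (div_mul_cancel₀ _ hr.ne').symm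
      _ < ((k : ℝ) + 1) * r := by
          exact mul_lt_mul_of_pos_right h1 hr
    rcases Nat.mod_two_eq_zero_or_one k with hk | hk
    · exact Or.inl ⟨Ann k, ⟨k, hk, rfl⟩, hg1, hg2⟩
    · exact Or.inr ⟨Ann k, ⟨k, hk, rfl⟩, hg1, hg2⟩
  · rintro A (⟨k, -, rfl⟩ | ⟨k, -, rfl⟩) <;> exact hAnnMem k


end FDCPaper
end

section
/- Let G be a countable discrete group and N₀ a normal subgroup of G. If G has stable FDC, then the quotient group G/N₀ also has stable FDC. -/
open Set Filter
open scoped symmDiff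

namespace FDCPaper

/-!
For a subquotient `H' ⧸ K'` of `G ⧸ N₀`, let `H ≤ G` be the preimage of `H'` and `K ≤ H` the
preimage of `K'` under the projection `π : H → H'`. Then `π` induces a bijection
`H ⧸ K → H' ⧸ K'`, and it is an isometry once `G ⧸ N₀` carries the quotient length: the
quotient length of `π w` is the infimum of `l` over the fibre of `π w`, and every coset
representative upstairs lifts a representative downstairs, so both quotient distances are
infima of `l` over the same subset of `H`. Hence the family `{H' ⧸ K'}` of `G ⧸ N₀` is, member
by member, isometric to a subfamily of the family `{H ⧸ K}` of `G`, and membership in `D_α`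
passes to such families by induction on `α`.
-/

theorem csInf_eq_csInf_of_exists_le_of_exists_lt_add {S T : Set ℝ} (hS : BddBelow S)
    (hT : BddBelow T) (hSne : S.Nonempty) (hST : ∀ s ∈ S, ∃ t ∈ T, t ≤ s)
    (hTS : ∀ t ∈ T, ∀ ε > 0, ∃ s ∈ S, s < t + ε) : sInf S = sInf T := by
  have hTne : T.Nonempty := let ⟨s, hs⟩ := hSne; let ⟨t, ht, _⟩ := hST s hs; ⟨t, ht⟩
  refine le_antisymm (le_csInf hTne fun t ht => le_of_forall_pos_lt_add fun ε hε => ?_)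
    (le_csInf hSne fun s hs => ?_)
  · obtain ⟨s, hs, hst⟩ := hTS t ht ε hε
    exact (csInf_le hS hs).trans_lt hst
  · obtain ⟨t, ht, hts⟩ := hST s hs
    exact (csInf_le hT ht).trans hts

section IsometricTransfer

variable {α β : Type*} {d : α → α → ℝ} {e : β → β → ℝ} {F : α → β}

theorem rDisjS.image (hF : ∀ x y, e (F x) (F y) = d x y) {r : ℝ} {P : Set (Set α)}
    (h : rDisjS d r P) : rDisjS e r (Set.image F '' P) := by
  rintro _ ⟨A, hA, rfl⟩ _ ⟨B, hB, rfl⟩ hne _ ⟨a, ha, rfl⟩ _ ⟨b, hb, rfl⟩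
  rw [hF]
  exact h A hA B hB (fun hAB => hne (hAB ▸ rfl)) a ha b hb

theorem PieceDecomp.image (hF : ∀ x y, e (F x) (F y) = d x y) {r : ℝ} {X : Set α}
    {𝒴 : Set (Set α)} {𝒴' : Set (Set β)} (h : PieceDecomp d r X 𝒴)
    (h𝒴 : ∀ A ∈ 𝒴, F '' A ∈ 𝒴') : PieceDecomp e r (F '' X) 𝒴' := by
  obtain ⟨P₀, P₁, rfl, hP₀, hP₁, hmem⟩ := h
  refine ⟨Set.image F '' P₀, Set.image F '' P₁, ?_, hP₀.image hF, hP₁.image hF, ?_⟩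
  · rw [Set.image_union, Set.image_sUnion, Set.image_sUnion]
  · rintro _ (⟨A, hA, rfl⟩ | ⟨A, hA, rfl⟩)
    exacts [h𝒴 A (hmem A (Or.inl hA)), h𝒴 A (hmem A (Or.inr hA))]

theorem mem_DColl_of_isometricEquiv {ι κ : Type*} {Z : ι → Type*} {W : κ → Type*}
    (d : ∀ i, Z i → Z i → ℝ) (e : ∀ j, W j → W j → ℝ) (τ : κ → ι) (F : ∀ j, Z (τ j) ≃ W j)
    (hF : ∀ j x y, e j (F j x) (F j y) = d (τ j) x y) {α : Ordinal.{0}} {𝒳 : Fam Z}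
    (h𝒳 : 𝒳 ∈ DColl d α) {𝒳' : Fam W}
    (hsub : ∀ p ∈ 𝒳', (⟨τ p.1, F p.1 ⁻¹' p.2⟩ : (i : ι) × Set (Z i)) ∈ 𝒳) :
    𝒳' ∈ DColl e α := by
  induction α using WellFoundedLT.induction generalizing 𝒳 𝒳' with
  | _ α IH =>
    rw [DColl] at h𝒳 ⊢
    rcases h𝒳 with ⟨hα, C, hC⟩ | ⟨hα, hdec⟩
    · refine Or.inl ⟨hα, C, fun ⟨j, Y⟩ hp x hx y hy => ?_⟩
      rw [← (F j).apply_symm_apply x, ← (F j).apply_symm_apply y, hF]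
      exact hC _ (hsub _ hp) _ (by simpa using hx) _ (by simpa using hy)
    · refine Or.inr ⟨hα, fun r hr => ?_⟩
      obtain ⟨β, hβ, 𝒴, h𝒴, hD⟩ := hdec r hr
      refine ⟨β, hβ, {q | (⟨τ q.1, F q.1 ⁻¹' q.2⟩ : (i : ι) × Set (Z i)) ∈ 𝒴},
        IH β hβ h𝒴 fun _ hq => hq, fun ⟨j, Y⟩ hp => ?_⟩
      show PieceDecomp (e j) r Y _
      rw [← (F j).image_preimage Y]
      refine (hD _ (hsub _ hp)).image (hF j) fun A hA => ?_
      show (⟨τ j, F j ⁻¹' (F j '' A)⟩ : (i : ι) × Set (Z i)) ∈ 𝒴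
      rwa [Equiv.preimage_image]

end IsometricTransfer

section QuotientComap

variable {H H' : Type*} [Group H] [Group H'] (φ : H →* H') (K' : Subgroup H')

def quotientComapMap : H ⧸ K'.comap φ → H' ⧸ K' :=
  Quotient.map' φ fun a b h => by
    simpa [QuotientGroup.leftRel_apply] using h

@[simp]
theorem quotientComapMap_mk (g : H) :
    quotientComapMap φ K' (g : H ⧸ K'.comap φ) = (φ g : H' ⧸ K') := rfl

theorem quotientComapMap_injective : Function.Injective (quotientComapMap φ K') := by
  rintro ⟨a⟩ ⟨b⟩ h
  refine QuotientGroup.eq.mpr ?_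
  simpa using QuotientGroup.eq.mp h

variable {φ}

theorem exists_mk_eq_of_mk_eq_quotientComapMap (hφ : Function.Surjective φ)
    {x : H ⧸ K'.comap φ} {g' : H'} (h : (g' : H' ⧸ K') = quotientComapMap φ K' x) :
    ∃ g : H, (g : H ⧸ K'.comap φ) = x ∧ φ g = g' := by
  obtain ⟨g₀, rfl⟩ := QuotientGroup.mk_surjective x
  obtain ⟨k, hk⟩ := hφ ((φ g₀)⁻¹ * g')
  have hkK : k ∈ K'.comap φ := by
    rw [Subgroup.mem_comap, hk]
    exact QuotientGroup.eq.mp (h.symm.trans rfl)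
  exact ⟨g₀ * k, QuotientGroup.eq.mpr (by simpa using hkK),
    by rw [map_mul, hk, mul_inv_cancel_left]⟩

theorem quotientComapMap_surjective (hφ : Function.Surjective φ) :
    Function.Surjective (quotientComapMap φ K') := by
  rintro ⟨g'⟩
  obtain ⟨g, rfl⟩ := hφ g'
  exact ⟨g, rfl⟩

noncomputable def quotientComapEquiv (hφ : Function.Surjective φ) : H ⧸ K'.comap φ ≃ H' ⧸ K' :=
  Equiv.ofBijective _ ⟨quotientComapMap_injective φ K', quotientComapMap_surjective K' hφ⟩

theorem qdist_quotientComapMap (hφ : Function.Surjective φ) {l : H → ℝ} (hl : ∀ w, 0 ≤ l w)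
    (x y : H ⧸ K'.comap φ) :
    qdist (fun z => sInf (l '' (φ ⁻¹' {z}))) K' (quotientComapMap φ K' x)
      (quotientComapMap φ K' y) = qdist l (K'.comap φ) x y := by
  set l' : H' → ℝ := fun z => sInf (l '' (φ ⁻¹' {z}))
  have hfiber_bdd (z : H') : BddBelow (l '' (φ ⁻¹' {z})) :=
    ⟨0, by rintro _ ⟨w, -, rfl⟩; exact hl w⟩
  have hl'_le (w : H) : l' (φ w) ≤ l w := csInf_le (hfiber_bdd _) ⟨w, rfl, rfl⟩
  refine (csInf_eq_csInf_of_exists_le_of_exists_lt_add ?_ ?_ ?_ ?_ ?_).symm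
  · exact ⟨0, by rintro _ ⟨g, h, -, -, rfl⟩; exact hl _⟩
  · exact ⟨0, by rintro _ ⟨g, h, -, -, rfl⟩; exact Real.sInf_nonneg (by
      rintro _ ⟨w, -, rfl⟩; exact hl w)⟩
  · obtain ⟨g, rfl⟩ := QuotientGroup.mk_surjective x
    obtain ⟨h, rfl⟩ := QuotientGroup.mk_surjective y
    exact ⟨_, g, h, rfl, rfl, rfl⟩
  · rintro _ ⟨g, h, rfl, rfl, rfl⟩
    refine ⟨_, ⟨φ g, φ h, rfl, rfl, rfl⟩, ?_⟩
    simpa [dl] using hl'_le (g⁻¹ * h)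
  · rintro _ ⟨g', h', hg', hh', rfl⟩ ε hε
    obtain ⟨w₀, hw₀⟩ := hφ (g'⁻¹ * h')
    obtain ⟨_, ⟨w, hw, rfl⟩, hlw⟩ :=
      Real.lt_sInf_add_pos (s := l '' (φ ⁻¹' {g'⁻¹ * h'})) ⟨_, w₀, hw₀, rfl⟩ hε
    -- lift `g'` to some `g` over `x`; then `g * w` lies over `y` and `g⁻¹ * (g * w) = w`
    obtain ⟨g, rfl, rfl⟩ := exists_mk_eq_of_mk_eq_quotientComapMap K' hφ hg'
    refine ⟨l w, ⟨g, g * w, rfl, quotientComapMap_injective φ K' ?_, by simp [dl]⟩, hlw⟩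
    rw [← hh', quotientComapMap_mk, map_mul, hw, mul_inv_cancel_left]

end QuotientComap

section SubquotientsOfQuotient

variable {G : Type*} [Group G] (N₀ : Subgroup G) [N₀.Normal]

def liftSubquotientIndex (j : Σ H' : Subgroup (G ⧸ N₀), Subgroup ↥H') :
    Σ H : Subgroup G, Subgroup ↥H :=
  ⟨j.1.comap (QuotientGroup.mk' N₀), j.2.comap ((QuotientGroup.mk' N₀).subgroupComap j.1)⟩

theorem qlen_coe_eq_sInf_image (l : G → ℝ) (H' : Subgroup (G ⧸ N₀)) (z : H') :
    qlen l N₀ z = sInf ((fun h : H'.comap (QuotientGroup.mk' N₀) => l h) ''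
      ((QuotientGroup.mk' N₀).subgroupComap H' ⁻¹' {z})) := by
  rw [qlen]
  congr 1
  ext r
  constructor
  · rintro ⟨g, hg, rfl⟩
    exact ⟨⟨g, show (g : G ⧸ N₀) ∈ H' from hg ▸ z.2⟩, Subtype.ext hg, rfl⟩
  · rintro ⟨h, hh, rfl⟩
    exact ⟨h, congrArg Subtype.val hh, rfl⟩

end SubquotientsOfQuotient

theorem stableFDC_quotient_general {G : Type*} [Group G]
    (l : G → ℝ) (hl : IsLengthFunction l) (N₀ : Subgroup G) [N₀.Normal]
    (hG : StableFDC G l) : StableFDC (G ⧸ N₀) (qlen l N₀) := by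
  obtain ⟨α, hα⟩ := hG
  have hsurj (H' : Subgroup (G ⧸ N₀)) :=
    (QuotientGroup.mk' N₀).subgroupComap_surjective_of_surjective H'
      (QuotientGroup.mk'_surjective N₀)
  refine ⟨α, mem_DColl_of_isometricEquiv (stableD l) (stableD (qlen l N₀))
    (liftSubquotientIndex N₀) (fun j => quotientComapEquiv j.2 (hsurj j.1))
    (fun j x y => ?_) hα ?_⟩
  · change qdist (fun z : j.1 => qlen l N₀ z) j.2 _ _ = _
    simp_rw [qlen_coe_eq_sInf_image]
    exact qdist_quotientComapMap j.2 (hsurj j.1) (fun w => hl.nonneg w) x y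
  · rintro ⟨j, Y⟩ ⟨hnorm, hY⟩
    exact ⟨hnorm.comap _, hY ▸ Set.preimage_univ⟩

/-- Lemma `quotient`: stable FDC passes to quotients (with the
quotient length function). -/
theorem stableFDC_quotient {G : Type*} [Group G] [Countable G]
    (l : G → ℝ) (hl : IsLengthFunction l) (N₀ : Subgroup G) [N₀.Normal]
    (hG : StableFDC G l) : StableFDC (G ⧸ N₀) (qlen l N₀) :=
  stableFDC_quotient_general l hl N₀ hG

end FDCPaper
end
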